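/- Let J ∈ so(N) be invertible with exp(J/k) = Id_N in SO(N) for an integer k ≥ 1, and let γ ∈ ℂ with kγ = α + βτ, α,β ∈ ℤ. Then for R ∈ so(N,J): Z(γ,J;τ,N,o_N)(R) = ε(J/k,N)^{α+β} · Z(0,J;τ,N,o_N)(R), i.e. equals (ε(J/k,N))^{α+β} times Tr(e^R,W_{1,q}(N⊗ℂ))/Str(e^R,S_N,o_N). -/

import Mathlib

/- STATEMENT 14: if exp(J/k) = Id_N (so the rotation numbers of J are kA_j) and
kγ = α + βτ with α, β ∈ ℤ, then for R ∈ so(N,J):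
Z(γ,J;τ,N,o_N)(R) = ε(J/k,N)^{α+β} · Z(0,J;τ,N,o_N)(R)
  = ((-1)^{Σ A_j})^{α+β} · Tr(e^R,W_{1,q}(N⊗ℂ))/Str(e^R,S_N,o_N),
expressed in the diagonal model (`Zdiag` as in the paper). -/

open Complex Real

noncomputable section

def qhex (τ : ℂ) : ℂ := Complex.exp ((π : ℂ) * I * τ)

def qex (τ : ℂ) : ℂ := Complex.exp (2 * (π : ℂ) * I * τ)

def phiNumF (τ z : ℂ) (n : ℕ) : ℂ :=
  (1 + qhex τ ^ (2 * n + 1) * Complex.exp (2 * (π : ℂ) * I * z)) *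
    (1 + qhex τ ^ (2 * n + 1) * Complex.exp (-(2 * (π : ℂ) * I * z)))

def phiDenF (τ z : ℂ) (n : ℕ) : ℂ :=
  (1 - qex τ ^ (n + 1) * Complex.exp (2 * (π : ℂ) * I * z)) *
    (1 - qex τ ^ (n + 1) * Complex.exp (-(2 * (π : ℂ) * I * z)))

def Phi1 (τ z : ℂ) : ℂ :=
  (Complex.exp (-((π : ℂ) * I * z)) - Complex.exp ((π : ℂ) * I * z))⁻¹ *
    ((∏' n : ℕ, phiNumF τ z n) / (∏' n : ℕ, phiDenF τ z n))

def Zstr {m : ℕ} (ν : ℂ) (a : Fin m → ℤ) (r : Fin m → ℂ) (γ : ℂ) : ℂ :=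
  ν * ∏ j, (Complex.exp (-((π : ℂ) * I * ((a j : ℂ) * γ + r j))) -
      Complex.exp ((π : ℂ) * I * ((a j : ℂ) * γ + r j)))

/-- Z(γ,J;τ,N,o_N)(R) in the diagonal model:
Tr(e^{γJ}e^R,W_{1,q}(N⊗ℂ)) / Str(e^{γJ}e^R,S_N,o_N), with the trace on W_{1,q}(N⊗ℂ)
computed from the eigenvalues e^{±2iπ(a_jγ+r_j)} of e^{γJ}e^R. -/
def Zdiag (τ : ℂ) {m : ℕ} (ν : ℂ) (a : Fin m → ℤ) (r : Fin m → ℂ) (γ : ℂ) : ℂ :=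
  (∏ j, ∏' n : ℕ, phiNumF τ ((a j : ℂ) * γ + r j) n) /
    ((∏ j, ∏' n : ℕ, phiDenF τ ((a j : ℂ) * γ + r j) n) * Zstr ν a r γ)

/-!
Write `p = e^{iπτ}` and `u = e^{iπz}`. Each of the four products in `Φ₁(τ, z)` is a
q-Pochhammer product `qProd (p²) c = ∏ (1 + c p^{2n})` with `c` a monomial in `p` and `u²`, so
`Φ₁(τ, z) = Phi1Mult p u`, and the translations `z ↦ z + 1`, `z ↦ z + τ` become `u ↦ -u`,
`u ↦ p u`. The first visibly changes the sign. For the second, `qProd x c = (1 + c) qProd x (c x)`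
moves each product by one step, and the four boundary factors so produced, together with the
prefactor `(u⁻¹ - u)⁻¹`, multiply to `-1`. Hence `Φ₁(z + a + bτ) = (-1)^{a+b} Φ₁(z)`, and
`k γ = α + β τ` makes every `k A_j γ + r_j` a translate of `r_j` by `A_j (α + β τ)`.

Only `p` and `u` ever need to be cancelled, so these identities hold verbatim under the
convention `0⁻¹ = 0`, whatever the zeros of the products.
-/

section QPochhammer

variable {𝕜 : Type*} [NormedField 𝕜] [CompleteSpace 𝕜] {x : 𝕜}

def qProd (x c : 𝕜) : 𝕜 := ∏' n : ℕ, (1 + c * x ^ n)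

lemma multipliable_one_add_mul_pow (hx : ‖x‖ < 1) (c : 𝕜) :
    Multipliable fun n : ℕ => 1 + c * x ^ n :=
  multipliable_one_add_of_summable <| by
    simpa [norm_mul, norm_pow] using (summable_geometric_of_lt_one (norm_nonneg x) hx).mul_left ‖c‖

lemma qProd_eq_one_add_mul (hx : ‖x‖ < 1) (c : 𝕜) :
    qProd x c = (1 + c) * qProd x (c * x) := by
  rw [qProd, tprod_eq_zero_mul' ?_, pow_zero, mul_one, qProd]
  · simp only [pow_succ', mul_assoc]
  · simpa only [pow_succ', mul_left_comm x, ← mul_assoc] using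
      multipliable_one_add_mul_pow hx (c * x)

end QPochhammer

lemma norm_sq_lt_one {𝕜 : Type*} [NormedDivisionRing 𝕜] {p : 𝕜} (hp : ‖p‖ < 1) : ‖p ^ 2‖ < 1 := by
  rw [norm_pow]; exact pow_lt_one₀ (norm_nonneg p) hp two_ne_zero

lemma apply_zpow_mul_of_apply_mul_eq_neg {G R : Type*} [CommGroupWithZero G] [Field R]
    {f : G → R} {c : G} (hc : c ≠ 0) (hf : ∀ u, f (c * u) = -f u) (n : ℤ) (u : G) :
    f (c ^ n * u) = (-1) ^ n * f u := by
  induction n using Int.induction_on with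
  | zero => simp
  | succ n ih =>
    rw [zpow_add_one₀ hc, mul_comm _ c, mul_assoc, hf, ih, zpow_add_one₀ (by norm_num)]
    ring
  | pred n ih =>
    have h := hf (c ^ (-(n : ℤ) - 1) * u)
    rw [← mul_assoc, ← zpow_one_add₀ hc, add_sub_cancel, ih] at h
    rw [zpow_sub_one₀ (a := (-1 : R)) (by norm_num), inv_neg_one]
    linear_combination h

lemma prod_zpow_eq_zpow_sum {ι G : Type*} [CommGroupWithZero G] {c : G} (hc : c ≠ 0)
    (s : Finset ι) (n : ι → ℤ) : ∏ j ∈ s, c ^ n j = c ^ ∑ j ∈ s, n j := by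
  induction s using Finset.cons_induction with
  | empty => simp
  | cons a s _ ih => rw [Finset.prod_cons, Finset.sum_cons, ih, zpow_add₀ hc]

def Phi1Mult (p u : ℂ) : ℂ :=
  (u⁻¹ - u)⁻¹ * (qProd (p ^ 2) (p * u ^ 2) * qProd (p ^ 2) (p * (u ^ 2)⁻¹) /
    (qProd (p ^ 2) (-(p ^ 2 * u ^ 2)) * qProd (p ^ 2) (-(p ^ 2 * (u ^ 2)⁻¹))))

lemma Phi1Mult_neg (p u : ℂ) : Phi1Mult p (-u) = -Phi1Mult p u := by
  simp only [Phi1Mult, neg_sq, inv_neg]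
  rw [show -u⁻¹ - -u = -(u⁻¹ - u) by ring, inv_neg, neg_mul]

lemma Phi1Mult_mul_self {p : ℂ} (hp : ‖p‖ < 1) (hp0 : p ≠ 0) (u : ℂ) :
    Phi1Mult p (p * u) = -Phi1Mult p u := by
  rcases eq_or_ne u 0 with rfl | hu
  · simp [Phi1Mult]
  have hx := norm_sq_lt_one hp
  have hN : qProd (p ^ 2) (p * u ^ 2) =
      (1 + p * u ^ 2) * qProd (p ^ 2) (p * (p ^ 2 * u ^ 2)) := by
    rw [qProd_eq_one_add_mul hx]; ring_nf
  have hN' : qProd (p ^ 2) (p * (p ^ 2 * u ^ 2)⁻¹) =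
      (p * u ^ 2)⁻¹ * (1 + p * u ^ 2) * qProd (p ^ 2) (p * (u ^ 2)⁻¹) := by
    rw [qProd_eq_one_add_mul hx]; congr 1
    · field_simp; ring
    · congr 1; field_simp
  have hD : qProd (p ^ 2) (-(p ^ 2 * u ^ 2)) =
      (1 - p ^ 2 * u ^ 2) * qProd (p ^ 2) (-(p ^ 2 * (p ^ 2 * u ^ 2))) := by
    rw [qProd_eq_one_add_mul hx]; ring_nf
  have hD' : qProd (p ^ 2) (-(p ^ 2 * (p ^ 2 * u ^ 2)⁻¹)) =
      -(u ^ 2)⁻¹ * (1 - u ^ 2) * qProd (p ^ 2) (-(p ^ 2 * (u ^ 2)⁻¹)) := by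
    rw [qProd_eq_one_add_mul hx]; congr 1
    · field_simp; ring
    · congr 1; field_simp
  have hP : (p * u)⁻¹ - p * u = (p * u)⁻¹ * (1 - p ^ 2 * u ^ 2) := by field_simp
  have hP' : u⁻¹ - u = u⁻¹ * (1 - u ^ 2) := by field_simp
  simp only [Phi1Mult, mul_pow, hN, hN', hD, hD', hP, hP']
  field_simp

lemma norm_qhex_lt_one {τ : ℂ} (hτ : 0 < τ.im) : ‖qhex τ‖ < 1 := by
  rw [qhex, Complex.norm_exp, Real.exp_lt_one_iff]
  simpa [Complex.mul_re] using mul_pos Real.pi_pos hτ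

lemma qhex_ne_zero (τ : ℂ) : qhex τ ≠ 0 := Complex.exp_ne_zero _

lemma exp_two_mul_eq_sq (z : ℂ) : Complex.exp (2 * z) = Complex.exp z ^ 2 := by
  exact_mod_cast Complex.exp_nat_mul z 2

lemma qex_eq_qhex_sq (τ : ℂ) : qex τ = qhex τ ^ 2 := by
  rw [qex, qhex, ← exp_two_mul_eq_sq, mul_assoc 2, mul_assoc 2]

lemma tprod_phiNumF {τ : ℂ} (hτ : 0 < τ.im) (z : ℂ) :
    ∏' n : ℕ, phiNumF τ z n =
      qProd (qhex τ ^ 2) (qhex τ * Complex.exp (π * I * z) ^ 2) *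
        qProd (qhex τ ^ 2) (qhex τ * (Complex.exp (π * I * z) ^ 2)⁻¹) := by
  have hx := norm_sq_lt_one (norm_qhex_lt_one hτ)
  rw [qProd, qProd, ← (multipliable_one_add_mul_pow hx _).tprod_mul
    (multipliable_one_add_mul_pow hx _)]
  refine tprod_congr fun n => ?_
  rw [phiNumF, Complex.exp_neg, ← exp_two_mul_eq_sq]
  ring_nf

lemma tprod_phiDenF {τ : ℂ} (hτ : 0 < τ.im) (z : ℂ) :
    ∏' n : ℕ, phiDenF τ z n =
      qProd (qhex τ ^ 2) (-(qhex τ ^ 2 * Complex.exp (π * I * z) ^ 2)) *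
        qProd (qhex τ ^ 2) (-(qhex τ ^ 2 * (Complex.exp (π * I * z) ^ 2)⁻¹)) := by
  have hx := norm_sq_lt_one (norm_qhex_lt_one hτ)
  rw [qProd, qProd, ← (multipliable_one_add_mul_pow hx _).tprod_mul
    (multipliable_one_add_mul_pow hx _)]
  refine tprod_congr fun n => ?_
  rw [phiDenF, Complex.exp_neg, ← exp_two_mul_eq_sq, qex_eq_qhex_sq]
  ring_nf

lemma Phi1_eq_Phi1Mult {τ : ℂ} (hτ : 0 < τ.im) (z : ℂ) :
    Phi1 τ z = Phi1Mult (qhex τ) (Complex.exp (π * I * z)) := by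
  rw [Phi1, Phi1Mult, tprod_phiNumF hτ, tprod_phiDenF hτ, Complex.exp_neg]

lemma exp_pi_mul_I_add_lattice (τ z : ℂ) (a b : ℤ) :
    Complex.exp (π * I * (z + (a + b * τ))) =
      (-1) ^ a * (qhex τ ^ b * Complex.exp (π * I * z)) := by
  rw [← Complex.exp_pi_mul_I, ← Complex.exp_int_mul, qhex, ← Complex.exp_int_mul,
    ← Complex.exp_add, ← Complex.exp_add]
  ring_nf

lemma Phi1_add_lattice {τ : ℂ} (hτ : 0 < τ.im) (z : ℂ) (a b : ℤ) :
    Phi1 τ (z + (a + b * τ)) = (-1) ^ (a + b) * Phi1 τ z := by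
  have hneg (u : ℂ) : Phi1Mult (qhex τ) (-1 * u) = -Phi1Mult (qhex τ) u := by
    rw [neg_one_mul, Phi1Mult_neg]
  rw [Phi1_eq_Phi1Mult hτ, Phi1_eq_Phi1Mult hτ, exp_pi_mul_I_add_lattice,
    apply_zpow_mul_of_apply_mul_eq_neg (f := Phi1Mult (qhex τ)) (by norm_num) hneg,
    apply_zpow_mul_of_apply_mul_eq_neg (qhex_ne_zero τ)
      (Phi1Mult_mul_self (norm_qhex_lt_one hτ) (qhex_ne_zero τ)),
    zpow_add₀ (by norm_num)]
  ring

lemma Zdiag_eq_inv_mul_prod_Phi1 (τ : ℂ) {m : ℕ} (ν : ℂ) (a : Fin m → ℤ) (r : Fin m → ℂ)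
    (γ : ℂ) :
    Zdiag τ ν a r γ = ν⁻¹ * ∏ j, Phi1 τ (a j * γ + r j) := by
  simp only [Zdiag, Zstr, Phi1, Finset.prod_mul_distrib, Finset.prod_div_distrib,
    Finset.prod_inv_distrib]
  ring

theorem Zdiag_order_k_general (τ : ℂ) (hτ : 0 < τ.im) {m : ℕ} (ν : ℂ)
    (k α β : ℤ) (γ : ℂ) (hkγ : (k : ℂ) * γ = (α : ℂ) + (β : ℂ) * τ)
    (A : Fin m → ℤ) (r : Fin m → ℂ) :
    Zdiag τ ν (fun j => k * A j) r γ =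
      ((-1 : ℂ) ^ (∑ j, A j)) ^ (α + β) * Zdiag τ ν (fun j => k * A j) r 0 := by
  have hshift (j : Fin m) : ((k * A j : ℤ) : ℂ) * γ + r j =
      r j + (((A j * α : ℤ) : ℂ) + ((A j * β : ℤ) : ℂ) * τ) := by
    push_cast
    linear_combination (A j : ℂ) * hkγ
  simp only [Zdiag_eq_inv_mul_prod_Phi1, hshift, Phi1_add_lattice hτ, mul_zero, zero_add,
    Finset.prod_mul_distrib, ← mul_add, zpow_mul]
  rw [Finset.prod_zpow, prod_zpow_eq_zpow_sum (by norm_num)]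
  ring

theorem Zdiag_order_k (τ : ℂ) (hτ : 0 < τ.im) {m : ℕ} (ν : ℂ) (hν : ν = 1 ∨ ν = -1)
    (k α β : ℤ) (hk : 1 ≤ k) (γ : ℂ) (hkγ : (k : ℂ) * γ = (α : ℂ) + (β : ℂ) * τ)
    (A : Fin m → ℤ) (r : Fin m → ℂ)
    (hpre : ∀ j, Complex.exp (-((π : ℂ) * I * (((k * A j : ℤ) : ℂ) * γ + r j))) -
      Complex.exp ((π : ℂ) * I * (((k * A j : ℤ) : ℂ) * γ + r j)) ≠ 0)
    (hpre0 : ∀ j, Complex.exp (-((π : ℂ) * I * (r j))) -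
      Complex.exp ((π : ℂ) * I * (r j)) ≠ 0)
    (hden : ∀ j n, phiDenF τ (((k * A j : ℤ) : ℂ) * γ + r j) n ≠ 0)
    (hden0 : ∀ j n, phiDenF τ (r j) n ≠ 0)
    (hnum : ∀ j n, phiNumF τ (((k * A j : ℤ) : ℂ) * γ + r j) n ≠ 0)
    (hnum0 : ∀ j n, phiNumF τ (r j) n ≠ 0) :
    Zdiag τ ν (fun j => k * A j) r γ =
      ((-1 : ℂ) ^ (∑ j, A j)) ^ (α + β) * Zdiag τ ν (fun j => k * A j) r 0 :=
  Zdiag_order_k_general τ hτ ν k α β γ hkγ A r
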